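/- For qubits, PM-simulable measurements coincide with the convex hull of two-outcome measurements: SP(2,n) = conv(P(2,n;2)), i.e. an n-outcome qubit POVM is simulable by projective measurements if and only if it is a convex combination of POVMs having at most two nonzero effects. -/

import Mathlib

open scoped ComplexOrder

/-- An `n`-outcome POVM on `ℂ^d`. -/
def IsPOVM {d n : ℕ} (M : Fin n → Matrix (Fin d) (Fin d) ℂ) : Prop :=
  (∀ i, (M i).PosSemidef) ∧ ∑ i, M i = 1

/-- A projective measurement: a POVM whose effects are orthogonal projections. -/
def IsProjectivePOVM {d n : ℕ} (M : Fin n → Matrix (Fin d) (Fin d) ℂ) : Prop :=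
  IsPOVM M ∧ ∀ i, (M i).IsHermitian ∧ M i * M i = M i

/-- `n`-outcome POVMs with at most two nonzero effects (two-outcome POVMs). -/
def TwoOutcome (d n : ℕ) : Set (Fin n → Matrix (Fin d) (Fin d) ℂ) :=
  {N | IsPOVM N ∧ ∃ a b : Fin n, ∀ j, j ≠ a → j ≠ b → N j = 0}


/-!
The traces of the nonzero effects of a projective measurement on `ℂ^d` are their ranks, positive
integers adding up to `tr 1 = d`; for qubits at most two effects are therefore nonzero.
Conversely, a measurement with two nonzero effects is `{A, 1 - A}` with `0 ≤ A ≤ 1`, and depends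
affinely on `A`. Diagonalising `A`, its eigenvalue vector lies in the cube `[0, 1]^d`, the convex
hull of the `0/1` vectors, so `A` is a convex combination of orthogonal projections `P`, and
`{A, 1 - A}` the same convex combination of the projective measurements `{P, 1 - P}`.
-/

open Finset Matrix
open scoped MatrixOrder

theorem Finset.exists_subset_pair_of_card_le_two {α : Type*} [DecidableEq α] [Nonempty α]
    {s : Finset α} (hs : #s ≤ 2) : ∃ a b, s ⊆ {a, b} := by
  obtain rfl | ⟨a, ha⟩ := s.eq_empty_or_nonempty
  · exact ⟨Classical.arbitrary α, Classical.arbitrary α, empty_subset _⟩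
  obtain ⟨b, hb⟩ := card_le_one_iff_subset_singleton.mp
    (show #(s.erase a) ≤ 1 by rw [card_erase_of_mem ha]; omega)
  exact ⟨a, b, (insert_erase ha).symm.subset.trans (insert_subset_insert a hb)⟩

namespace Matrix

variable {m K 𝕜 : Type*} [Fintype m] [DecidableEq m]

theorem trace_eq_rank_of_isIdempotentElem [Field K] {P : Matrix m m K} (hP : IsIdempotentElem P) :
    P.trace = P.rank := by
  have hP' : IsIdempotentElem (toLin' P) := hP.map toLinAlgEquiv'
  rw [← trace_toLin'_eq, (LinearMap.IsIdempotentElem.isProj_range _ hP').trace]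
  rfl

theorem rank_pos_of_ne_zero [Field K] {P : Matrix m m K} (hP : P ≠ 0) : 0 < P.rank := by
  rw [Nat.pos_iff_ne_zero, rank, Ne, Submodule.finrank_eq_zero, LinearMap.range_eq_bot,
    ← toLin'_apply', LinearEquiv.map_eq_zero_iff]
  exact hP

theorem isStarProjection_diagonal_ofReal [RCLike 𝕜] {v : m → ℝ} (hv : ∀ i, v i = 0 ∨ v i = 1) :
    IsStarProjection (diagonal fun i => (v i : 𝕜)) where
  isIdempotentElem := by
    rw [IsIdempotentElem, diagonal_mul_diagonal]
    congr 1
    funext i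
    rcases hv i with h | h <;> simp [h]
  isSelfAdjoint := by
    rw [IsSelfAdjoint, star_eq_conjTranspose, diagonal_conjTranspose]
    simp

theorem mem_convexHull_isStarProjection [RCLike 𝕜] {A : Matrix m m 𝕜} (hA₀ : 0 ≤ A)
    (hA₁ : A ≤ 1) : A ∈ convexHull ℝ {P | IsStarProjection P} := by
  have hA := hA₀.posSemidef.isHermitian
  let U := Unitary.conjStarAlgAut 𝕜 _ hA.eigenvectorUnitary
  let φ : (m → ℝ) →ₗ[ℝ] Matrix m m 𝕜 :=
    (U.toAlgEquiv.toLinearMap.restrictScalars ℝ) ∘ₗ diagonalLinearMap m ℝ 𝕜 ∘ₗ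
      LinearMap.compLeft (Algebra.linearMap ℝ 𝕜) m
  have hvertices : φ '' Set.univ.pi (fun _ => {0, 1}) ⊆ {P | IsStarProjection P} := by
    rintro _ ⟨v, hv, rfl⟩
    exact (isStarProjection_diagonal_ofReal fun i => hv i trivial).map U
  have hcube : hA.eigenvalues ∈ convexHull ℝ (Set.univ.pi fun _ => ({0, 1} : Set ℝ)) := by
    rw [convexHull_pi]
    intro i _
    rw [convexHull_pair, segment_eq_Icc zero_le_one]
    exact ⟨hA₀.posSemidef.eigenvalues_nonneg i,
      (CFC.le_one_iff A).mp hA₁ _ (hA.eigenvalues_mem_spectrum_real i)⟩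
  have hφ : φ hA.eigenvalues = A := hA.spectral_theorem.symm
  rw [← hφ]
  exact convexHull_mono hvertices (φ.image_convexHull _ ▸ Set.mem_image_of_mem φ hcube)

end Matrix

variable {d n : ℕ}

theorem IsPOVM.nonneg {M : Fin n → Matrix (Fin d) (Fin d) ℂ} (hM : IsPOVM M) (i : Fin n) :
    0 ≤ M i :=
  (hM.1 i).nonneg

theorem IsPOVM.le_one {M : Fin n → Matrix (Fin d) (Fin d) ℂ} (hM : IsPOVM M) (i : Fin n) :
    M i ≤ 1 :=
  hM.2 ▸ single_le_sum (fun j _ => hM.nonneg j) (mem_univ i)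

theorem IsPOVM.nonempty [NeZero d] {M : Fin n → Matrix (Fin d) (Fin d) ℂ} (hM : IsPOVM M) :
    Nonempty (Fin n) := by
  by_contra h
  rw [not_nonempty_iff] at h
  simpa using hM.2

theorem isProjectivePOVM_iff {M : Fin n → Matrix (Fin d) (Fin d) ℂ} :
    IsProjectivePOVM M ↔ (∀ i, IsStarProjection (M i)) ∧ ∑ i, M i = 1 := by
  simp only [IsProjectivePOVM, IsPOVM, isStarProjection_iff, IsIdempotentElem,
    ← isHermitian_iff_isSelfAdjoint]
  refine ⟨fun h => ⟨fun i => ⟨(h.2 i).2, (h.2 i).1⟩, h.1.2⟩,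
    fun h => ⟨⟨fun i => ?_, h.2⟩, fun i => ⟨(h.1 i).2, (h.1 i).1⟩⟩⟩
  exact (IsStarProjection.nonneg ⟨(h.1 i).1, (h.1 i).2.isSelfAdjoint⟩).posSemidef

theorem IsProjectivePOVM.card_ne_zero_le {M : Fin n → Matrix (Fin d) (Fin d) ℂ}
    (hM : IsProjectivePOVM M) : #{i | M i ≠ 0} ≤ d := by
  have hrank : ∑ i, (M i).rank = d := by
    apply Nat.cast_injective (R := ℂ)
    simp_rw [Nat.cast_sum, ← trace_eq_rank_of_isIdempotentElem (hM.2 _).2, ← trace_sum, hM.1.2,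
      trace_one, Fintype.card_fin]
  calc #{i | M i ≠ 0} = ∑ i, if M i ≠ 0 then 1 else 0 := card_filter _ _
    _ ≤ ∑ i, (M i).rank := by
      gcongr with i
      split_ifs with hi
      exacts [rank_pos_of_ne_zero hi, Nat.zero_le _]
    _ = d := hrank

theorem IsProjectivePOVM.mem_twoOutcome {M : Fin n → Matrix (Fin 2) (Fin 2) ℂ}
    (hM : IsProjectivePOVM M) : M ∈ TwoOutcome 2 n := by
  have := hM.1.nonempty
  obtain ⟨a, b, hab⟩ := exists_subset_pair_of_card_le_two hM.card_ne_zero_le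
  refine ⟨hM.1, a, b, fun j hja hjb => ?_⟩
  by_contra hj
  simpa [hja, hjb] using hab (mem_filter.mpr ⟨mem_univ j, hj⟩)

noncomputable def twoOutcomeMap (a b : Fin n) :
    Matrix (Fin d) (Fin d) ℂ →ᵃ[ℝ] (Fin n → Matrix (Fin d) (Fin d) ℂ) where
  toFun A := Pi.single a A + Pi.single b (1 - A)
  linear := LinearMap.single ℝ (fun _ => Matrix (Fin d) (Fin d) ℂ) a -
    LinearMap.single ℝ (fun _ => Matrix (Fin d) (Fin d) ℂ) b
  map_vadd' P A := by
    simp only [vadd_eq_add, LinearMap.sub_apply, LinearMap.single_apply, Pi.single_add,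
      Pi.single_sub]
    abel

theorem twoOutcomeMap_apply (a b : Fin n) (A : Matrix (Fin d) (Fin d) ℂ) :
    twoOutcomeMap a b A = Pi.single a A + Pi.single b (1 - A) :=
  rfl

theorem isProjectivePOVM_twoOutcomeMap (a b : Fin n) {P : Matrix (Fin d) (Fin d) ℂ}
    (hP : IsStarProjection P) : IsProjectivePOVM (twoOutcomeMap a b P) := by
  refine isProjectivePOVM_iff.mpr ⟨fun j => ?_, ?_⟩
  · simp only [twoOutcomeMap_apply, Pi.add_apply, Pi.single_apply]
    split_ifs
    · simp [IsStarProjection.one]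
    · simpa using hP
    · simpa using hP.one_sub
    · simp [IsStarProjection.zero]
  · simp [twoOutcomeMap_apply, sum_add_distrib]

theorem IsPOVM.eq_twoOutcomeMap {N : Fin n → Matrix (Fin d) (Fin d) ℂ} {a b : Fin n}
    (hN : IsPOVM N) (hab : ∀ j, j ≠ a → j ≠ b → N j = 0) : N = twoOutcomeMap a b (N a) := by
  by_cases hba : b = a
  · subst hba
    have hone : N b = 1 := by rw [← hN.2, Fintype.sum_eq_single b fun j hj => hab j hj hj]
    funext j
    by_cases hj : j = b
    · simp [twoOutcomeMap_apply, hj, hone]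
    · simp [twoOutcomeMap_apply, hj, hab j hj hj]
  · have hb : N b = 1 - N a := by
      rw [eq_sub_iff_add_eq', ← hN.2, Fintype.sum_eq_add a b (Ne.symm hba)]
      exact fun j hj => hab j hj.1 hj.2
    funext j
    by_cases hja : j = a
    · simp [twoOutcomeMap_apply, hja, Ne.symm hba]
    by_cases hjb : j = b
    · simp [twoOutcomeMap_apply, hjb, hba, hb]
    · simp [twoOutcomeMap_apply, hja, hjb, hab j hja hjb]

theorem twoOutcome_subset_convexHull (d n : ℕ) :
    TwoOutcome d n ⊆
      convexHull ℝ {P : Fin n → Matrix (Fin d) (Fin d) ℂ | IsProjectivePOVM P} := by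
  rintro N ⟨hN, a, b, hab⟩
  have hvertices : twoOutcomeMap a b '' {P : Matrix (Fin d) (Fin d) ℂ | IsStarProjection P} ⊆
      {P | IsProjectivePOVM P} := by
    rintro _ ⟨P, hP, rfl⟩
    exact isProjectivePOVM_twoOutcomeMap a b hP
  rw [hN.eq_twoOutcomeMap hab]
  refine convexHull_mono hvertices ?_
  rw [← AffineMap.image_convexHull]
  exact Set.mem_image_of_mem _ (mem_convexHull_isStarProjection (hN.nonneg a) (hN.le_one a))

/-- For qubits, the set of PM-simulable measurements coincides with the convex
hull of two-outcome measurements: `SP(2,n) = conv(P(2,n;2))`. -/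
theorem qubit_SP_eq_convexHull_twoOutcome (n : ℕ) :
    convexHull ℝ {P : Fin n → Matrix (Fin 2) (Fin 2) ℂ | IsProjectivePOVM P} =
      convexHull ℝ (TwoOutcome 2 n) :=
  (convexHull_mono fun _ hM => hM.mem_twoOutcome).antisymm
    (convexHull_min (twoOutcome_subset_convexHull 2 n) (convex_convexHull ℝ _))
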